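/- arXiv:2312.00243 — 5 statements merged into one kernel-verified Lean document; each statement's English description precedes it below -/
import Mathlib

section
/- The reserve-price first-price equilibrium strategy β_QL satisfies interim incentive compatibility for payoff-maximizing bidders with uniform priors: for all v, w ∈ [r, 1], w^(N−1)·(v − β_QL(w)) ≤ v^(N−1)·(v − β_QL(v)). That is, the interim utility w^(N−1)·(v − β_QL(w)) of a bidder with value v who mimics type w (winning with probability w^(N−1) and paying β_QL(w)) is maximized at w = v. -/
/-! The interim utility of mimicking `w` is `w^(N-1)·v - ((N-1)/N)·w^N - r^N/N`, so the loss from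
misreporting is `(v^N - w^N - N·w^(N-1)·(v - w)) / N`: the gap between `x ^ N` and its tangent
line at `w`, which Bernoulli's inequality makes nonnegative. -/

/-- The reserve-price first-price equilibrium strategy for payoff-maximizing
(quasi-linear) bidders with i.i.d. uniform `[0,1]` values, `N` bidders and reserve
price `r`: `β_QL(v) = ((N-1)/N)·v + (1/N)·r^N / v^(N-1)`. -/
noncomputable def betaQL (N : ℕ) (r v : ℝ) : ℝ :=
  ((N : ℝ) - 1) / N * v + 1 / N * (r ^ N / v ^ (N - 1))

lemma mul_sub_betaQL (N : ℕ) (r : ℝ) {w : ℝ} (hw : w ≠ 0) (v : ℝ) :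
    w ^ (N - 1) * (v - betaQL N r w) = w ^ (N - 1) * v - (N - 1) / N * w ^ N - r ^ N / N := by
  rcases N with _ | n
  · simp [betaQL]
  · simp only [betaQL, Nat.add_sub_cancel, Nat.cast_add_one]
    field_simp
    ring

lemma mul_sub_betaQL_sub_mul_sub_betaQL (N : ℕ) (r : ℝ) {v w : ℝ} (hv : v ≠ 0) (hw : w ≠ 0) :
    v ^ (N - 1) * (v - betaQL N r v) - w ^ (N - 1) * (v - betaQL N r w) =
      (v ^ N - (w ^ N + N * w ^ (N - 1) * (v - w))) / N := by
  rw [mul_sub_betaQL N r hv, mul_sub_betaQL N r hw]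
  rcases N with _ | n
  · simp
  · simp only [Nat.add_sub_cancel, Nat.cast_add_one]
    field_simp
    ring

theorem betaQL_interim_ic_general
    (N : ℕ) (r : ℝ) (hr0 : 0 < r) :
    ∀ v ∈ Set.Icc r 1, ∀ w ∈ Set.Icc r 1,
      w ^ (N - 1) * (v - betaQL N r w) ≤ v ^ (N - 1) * (v - betaQL N r v) := by
  intro v hv w hw
  have hv0 : 0 < v := hr0.trans_le hv.1
  have hw0 : 0 < w := hr0.trans_le hw.1
  have bernoulli : w ^ N + N * w ^ (N - 1) * (v - w) ≤ v ^ N := by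
    simpa using pow_add_mul_le_add_pow hw0.le (b := v - w) (by linarith) N
  rw [← sub_nonneg, mul_sub_betaQL_sub_mul_sub_betaQL N r hv0.ne' hw0.ne']
  exact div_nonneg (sub_nonneg.mpr bernoulli) N.cast_nonneg

/-- Interim incentive compatibility of `β_QL` for payoff-maximizing bidders with
uniform priors: for all `v, w ∈ [r, 1]`, the interim utility
`w^(N-1)·(v − β_QL(w))` of a bidder with value `v` mimicking type `w` (winning with
probability `w^(N-1)` and paying `β_QL(w)`) is at most the truthful interim utility
`v^(N-1)·(v − β_QL(v))`. -/
theorem betaQL_interim_ic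
    (N : ℕ) (hN : 2 ≤ N) (r : ℝ) (hr0 : 0 < r) (hr1 : r ≤ 1) :
    ∀ v ∈ Set.Icc r 1, ∀ w ∈ Set.Icc r 1,
      w ^ (N - 1) * (v - betaQL N r w) ≤ v ^ (N - 1) * (v - betaQL N r v) :=
  betaQL_interim_ic_general N r hr0
end

section
/- For two ROI-maximizing bidders with uniform priors and reserve price r, the strategy β(v) = v/(1 − log r + log v) solves the equilibrium initial value problem of the first-price auction: for every v with 0 < r ≤ v, the denominator satisfies 1 − log r + log v ≥ 1 > 0, β(r) = r, and β has derivative β(v)/v − β(v)²/v² at v, i.e., β satisfies the ODE β'(v) = (N−1)·(β(v)/v − β(v)²/v²) for N = 2. -/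
/-- The ROI equilibrium strategy of the first-price auction with `N = 2` bidders having
i.i.d. uniform `[0,1]` values and reserve price `r`: `β(v) = v / (1 − log r + log v)`. -/
noncomputable def betaROI2 (r v : ℝ) : ℝ :=
  v / (1 - Real.log r + Real.log v)

open Real

lemma one_le_one_sub_log_add_log {r v : ℝ} (hr : 0 < r) (hv : r ≤ v) :
    1 ≤ 1 - log r + log v := by
  linarith [log_le_log hr hv]

@[simp]
lemma betaROI2_self (r : ℝ) : betaROI2 r r = r := by
  simp [betaROI2]

-- With `D = 1 - log r + log v`, the quotient rule gives `(D - 1) / D² = 1/D - 1/D²`, and `1/D = β(v)/v`.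
lemma hasDerivAt_betaROI2 {r v : ℝ} (hv : v ≠ 0) (hD : 1 - log r + log v ≠ 0) :
    HasDerivAt (betaROI2 r) (betaROI2 r v / v - betaROI2 r v ^ 2 / v ^ 2) v := by
  have hquot : HasDerivAt (betaROI2 r)
      ((1 * (1 - log r + log v) - v * (0 + v⁻¹)) / (1 - log r + log v) ^ 2) v :=
    (hasDerivAt_id v).div ((hasDerivAt_const v (1 - log r)).add (hasDerivAt_log hv)) hD
  convert hquot using 1
  simp only [betaROI2]
  field_simp
  ring

theorem betaROI2_solves_ivp_general
    (r : ℝ) (hr0 : 0 < r) :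
    (∀ v : ℝ, r ≤ v →
      1 ≤ 1 - Real.log r + Real.log v ∧ 0 < 1 - Real.log r + Real.log v) ∧
    betaROI2 r r = r ∧
    ∀ v : ℝ, r ≤ v →
      HasDerivAt (betaROI2 r)
        (betaROI2 r v / v - (betaROI2 r v) ^ 2 / v ^ 2) v := by
  have hden : ∀ v, r ≤ v → 1 ≤ 1 - log r + log v := fun v hv ↦
    one_le_one_sub_log_add_log hr0 hv
  refine ⟨fun v hv ↦ ⟨hden v hv, one_pos.trans_le (hden v hv)⟩, betaROI2_self r, ?_⟩
  intro v hv
  exact hasDerivAt_betaROI2 (hr0.trans_le hv).ne' (one_pos.trans_le (hden v hv)).ne'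

/-- For two ROI-maximizing bidders with uniform priors and reserve price `r`,
`β(v) = v/(1 − log r + log v)` solves the equilibrium initial value problem of the
first-price auction: for every `v ≥ r` the denominator satisfies
`1 − log r + log v ≥ 1 > 0`, `β(r) = r`, and `β` has derivative
`β(v)/v − β(v)²/v²` at `v`, i.e. `β` satisfies the ODE
`β'(v) = (N−1)·(β(v)/v − β(v)²/v²)` for `N = 2`. -/
theorem betaROI2_solves_ivp
    (r : ℝ) (hr0 : 0 < r) (hr1 : r ≤ 1) :
    (∀ v : ℝ, r ≤ v →
      1 ≤ 1 - Real.log r + Real.log v ∧ 0 < 1 - Real.log r + Real.log v) ∧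
    betaROI2 r r = r ∧
    ∀ v : ℝ, r ≤ v →
      HasDerivAt (betaROI2 r)
        (betaROI2 r v / v - (betaROI2 r v) ^ 2 / v ^ 2) v :=
  betaROI2_solves_ivp_general r hr0
end

section
/- For N ≥ 3 ROI-maximizing bidders with uniform priors and reserve price r, the strategy β(v) = (N−2)·v^(N−1)/((N−1)·v^(N−2) − r^(N−2)) solves the equilibrium initial value problem of the first-price auction: for every v with 0 < r ≤ v, the denominator satisfies (N−1)·v^(N−2) − r^(N−2) > 0, β(r) = r, and β has derivative (N−1)·(β(v)/v − β(v)²/v²) at v, i.e., β satisfies the ODE β'(v) = (N−1)·(β(v)/v − β(v)²/v²). -/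
/-!
Write `N = m + 2` and `c = r ^ m`, so that `β(v) = m v^(m+1) / ((m+1) v^m - c)`. The denominator
is positive for `v ≥ r > 0` because `(m+1) v^m > v^m ≥ r^m`, and at `v = r` it equals `m r^m`,
which gives `β(r) = r`. The ODE is a quotient-rule computation: both sides equal
`m (m+1) v^m (v^m - c) / ((m+1) v^m - c)^2`, whatever the value of `c`.
-/

/-- The ROI equilibrium strategy of the first-price auction with `N ≥ 3` bidders having
i.i.d. uniform `[0,1]` values and reserve price `r`:
`β(v) = (N−2)·v^(N−1) / ((N−1)·v^(N−2) − r^(N−2))`. -/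
noncomputable def betaROIN (N : ℕ) (r v : ℝ) : ℝ :=
  ((N : ℝ) - 2) * v ^ (N - 1) / (((N : ℝ) - 1) * v ^ (N - 2) - r ^ (N - 2))

noncomputable def roiBid (m : ℕ) (c v : ℝ) : ℝ :=
  m * v ^ (m + 1) / ((m + 1) * v ^ m - c)

lemma betaROIN_add_two (m : ℕ) (r : ℝ) : betaROIN (m + 2) r = roiBid m (r ^ m) := by
  funext v
  simp only [betaROIN, roiBid, Nat.add_sub_cancel, Nat.add_succ_sub_one]
  push_cast
  ring_nf

lemma pow_lt_mul_pow {a r v : ℝ} (n : ℕ) (ha : 1 < a) (hr : 0 ≤ r) (hrv : r ≤ v) (hv : 0 < v) :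
    r ^ n < a * v ^ n :=
  calc r ^ n ≤ v ^ n := pow_le_pow_left₀ hr hrv n
    _ < a * v ^ n := lt_mul_of_one_lt_left (pow_pos hv n) ha

lemma roiBid_self {m : ℕ} (hm : m ≠ 0) {v : ℝ} (hv : v ≠ 0) : roiBid m (v ^ m) v = v := by
  have hden : ((m : ℝ) + 1) * v ^ m - v ^ m ≠ 0 := by
    rw [add_one_mul, add_sub_cancel_right]
    exact mul_ne_zero (Nat.cast_ne_zero.2 hm) (pow_ne_zero m hv)
  rw [roiBid, div_eq_iff hden, pow_succ]
  ring

lemma hasDerivAt_pow_of_ne_zero (m : ℕ) {v : ℝ} (hv : v ≠ 0) :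
    HasDerivAt (· ^ m) (m * v ^ m / v) v := by
  refine (hasDerivAt_pow m v).congr_deriv ?_
  rcases m with _ | n
  · simp
  · rw [pow_succ, mul_div_assoc, mul_div_cancel_right₀ _ hv, Nat.add_sub_cancel]

lemma hasDerivAt_roiBid (m : ℕ) (c : ℝ) {v : ℝ} (hv : v ≠ 0) (hden : (m + 1) * v ^ m - c ≠ 0) :
    HasDerivAt (roiBid m c) ((m + 1) * (roiBid m c v / v - roiBid m c v ^ 2 / v ^ 2)) v := by
  have hnum := (hasDerivAt_pow_of_ne_zero (m + 1) hv).const_mul (m : ℝ)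
  have hdenom := ((hasDerivAt_pow_of_ne_zero m hv).const_mul ((m : ℝ) + 1)).sub_const c
  refine (hnum.div hdenom hden).congr_deriv ?_
  simp only [roiBid]
  push_cast
  field_simp
  ring

theorem betaROIN_solves_ivp_general
    (N : ℕ) (hN : 3 ≤ N) (r : ℝ) (hr0 : 0 < r) :
    (∀ v : ℝ, r ≤ v → 0 < ((N : ℝ) - 1) * v ^ (N - 2) - r ^ (N - 2)) ∧
    betaROIN N r r = r ∧
    ∀ v : ℝ, r ≤ v →
      HasDerivAt (betaROIN N r)
        (((N : ℝ) - 1) *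
          (betaROIN N r v / v - (betaROIN N r v) ^ 2 / v ^ 2)) v := by
  obtain ⟨m, rfl⟩ : ∃ m, N = m + 2 := ⟨N - 2, by omega⟩
  have hm : (1 : ℝ) < m + 1 := by norm_cast; omega
  have hden : ∀ v, r ≤ v → 0 < ((m : ℝ) + 1) * v ^ m - r ^ m := fun v hv =>
    sub_pos.2 (pow_lt_mul_pow m hm hr0.le hv (hr0.trans_le hv))
  have hcoeff : ((m + 2 : ℕ) : ℝ) - 1 = m + 1 := by push_cast; ring
  rw [hcoeff, Nat.add_sub_cancel, betaROIN_add_two]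
  exact ⟨hden, roiBid_self (by omega) hr0.ne',
    fun v hv => hasDerivAt_roiBid m _ (hr0.trans_le hv).ne' (hden v hv).ne'⟩

/-- For `N ≥ 3` ROI-maximizing bidders with uniform priors and reserve price `r`,
`β(v) = (N−2)·v^(N−1)/((N−1)·v^(N−2) − r^(N−2))` solves the equilibrium initial value
problem of the first-price auction: for every `v ≥ r` the denominator satisfies
`(N−1)·v^(N−2) − r^(N−2) > 0`, `β(r) = r`, and `β` has derivative
`(N−1)·(β(v)/v − β(v)²/v²)` at `v`, i.e. `β` satisfies the ODE
`β'(v) = (N−1)·(β(v)/v − β(v)²/v²)`. -/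
theorem betaROIN_solves_ivp
    (N : ℕ) (hN : 3 ≤ N) (r : ℝ) (hr0 : 0 < r) (hr1 : r ≤ 1) :
    (∀ v : ℝ, r ≤ v → 0 < ((N : ℝ) - 1) * v ^ (N - 2) - r ^ (N - 2)) ∧
    betaROIN N r r = r ∧
    ∀ v : ℝ, r ≤ v →
      HasDerivAt (betaROIN N r)
        (((N : ℝ) - 1) *
          (betaROIN N r v / v - (betaROIN N r v) ^ 2 / v ^ 2)) v :=
  betaROIN_solves_ivp_general N hN r hr0
end

section
/- The ROI equilibrium strategy β(v) = (N−2)·v^(N−1)/((N−1)·v^(N−2) − r^(N−2)) for N ≥ 3 uniform bidders shades bids between the reserve price and the true value and is strictly increasing: for every v ∈ [r, 1] it holds that r ≤ β(v) ≤ v (so the equilibrium ROI (v − β(v))/β(v) is nonnegative), and β is strictly monotonically increasing on [r, 1]. -/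
open Set

lemma betaROIN_add_two_s9 (k : ℕ) (r v : ℝ) :
    betaROIN (k + 2) r v = k * v ^ (k + 1) / ((k + 1) * v ^ k - r ^ k) := by
  simp only [betaROIN, Nat.add_sub_cancel, show k + 2 - 1 = k + 1 from rfl]
  push_cast
  ring

lemma roiDenominator_pos {k : ℕ} (hk : 0 < k) {r v : ℝ} (hr : 0 < r) (hrv : r ≤ v) :
    0 < (k + 1) * v ^ k - r ^ k := by
  have hpow : r ^ k ≤ v ^ k := pow_le_pow_left₀ hr.le hrv k
  have hkv : 0 < (k : ℝ) * v ^ k := mul_pos (by exact_mod_cast hk) (pow_pos (hr.trans_le hrv) k)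
  linarith

lemma betaROIN_self {k : ℕ} (hk : 0 < k) {r : ℝ} (hr : r ≠ 0) : betaROIN (k + 2) r r = r := by
  have hk' : (k : ℝ) ≠ 0 := by exact_mod_cast hk.ne'
  have hden : (k + 1) * r ^ k - r ^ k = k * r ^ k := by ring
  rw [betaROIN_add_two_s9, hden, pow_succ]
  field_simp

lemma betaROIN_le_self {k : ℕ} (hk : 0 < k) {r v : ℝ} (hr : 0 < r) (hrv : r ≤ v) :
    betaROIN (k + 2) r v ≤ v := by
  have hv : 0 < v := hr.trans_le hrv
  have hpow : r ^ k ≤ v ^ k := pow_le_pow_left₀ hr.le hrv k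
  rw [betaROIN_add_two_s9, div_le_iff₀ (roiDenominator_pos hk hr hrv)]
  nlinarith [mul_le_mul_of_nonneg_left hpow hv.le, pow_succ v k]

lemma hasDerivAt_betaROIN {k : ℕ} (hk : 0 < k) (r : ℝ) {v : ℝ}
    (hv : (k + 1) * v ^ k - r ^ k ≠ 0) :
    HasDerivAt (betaROIN (k + 2) r)
      (k * (k + 1) * v ^ k * (v ^ k - r ^ k) / ((k + 1) * v ^ k - r ^ k) ^ 2) v := by
  have hβ : betaROIN (k + 2) r = fun v ↦ k * v ^ (k + 1) / ((k + 1) * v ^ k - r ^ k) :=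
    funext (betaROIN_add_two_s9 k r)
  rw [hβ]
  refine (((hasDerivAt_pow (k + 1) v).const_mul (k : ℝ)).div
    (((hasDerivAt_pow k v).const_mul ((k : ℝ) + 1)).sub_const (r ^ k)) hv).congr_deriv ?_
  have hsplit : v ^ k = v ^ (k - 1) * v := by rw [← pow_succ, Nat.sub_add_cancel hk]
  rw [Nat.add_sub_cancel, pow_succ, hsplit]
  push_cast
  ring

lemma betaROIN_strictMonoOn {k : ℕ} (hk : 0 < k) {r : ℝ} (hr : 0 < r) :
    StrictMonoOn (betaROIN (k + 2) r) (Ici r) := by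
  have hderiv (v : ℝ) (hv : r ≤ v) :=
    hasDerivAt_betaROIN hk r (roiDenominator_pos hk hr hv).ne'
  refine strictMonoOn_of_deriv_pos (convex_Ici r)
    (fun v hv ↦ (hderiv v hv).continuousAt.continuousWithinAt) ?_
  rw [interior_Ici]
  intro v (hv : r < v)
  rw [(hderiv v hv.le).deriv]
  have hgap : 0 < v ^ k - r ^ k := sub_pos.2 (pow_lt_pow_left₀ hv hr.le hk.ne')
  have hv0 : 0 < v := hr.trans hv
  exact div_pos (mul_pos (by positivity) hgap) (pow_pos (roiDenominator_pos hk hr hv.le) 2)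

theorem betaROIN_shading_and_strictMono_general
    (N : ℕ) (hN : 3 ≤ N) (r : ℝ) (hr0 : 0 < r) :
    (∀ v ∈ Set.Icc r 1,
      r ≤ betaROIN N r v ∧ betaROIN N r v ≤ v ∧
        0 ≤ (v - betaROIN N r v) / betaROIN N r v) ∧
    StrictMonoOn (betaROIN N r) (Set.Icc r 1) := by
  obtain ⟨k, hk, rfl⟩ : ∃ k, 0 < k ∧ N = k + 2 := ⟨N - 2, by omega, by omega⟩
  have hmono := betaROIN_strictMonoOn hk hr0
  refine ⟨fun v hv ↦ ?_, hmono.mono Icc_subset_Ici_self⟩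
  have hlower : r ≤ betaROIN (k + 2) r v :=
    calc r = betaROIN (k + 2) r r := (betaROIN_self hk hr0.ne').symm
      _ ≤ betaROIN (k + 2) r v := hmono.monotoneOn self_mem_Ici hv.1 hv.1
  have hupper := betaROIN_le_self hk hr0 hv.1
  exact ⟨hlower, hupper, div_nonneg (sub_nonneg.2 hupper) (hr0.le.trans hlower)⟩

/-- The ROI equilibrium strategy `β(v) = (N−2)·v^(N−1)/((N−1)·v^(N−2) − r^(N−2))` for
`N ≥ 3` uniform bidders shades bids between the reserve price and the true value and is
strictly increasing: for every `v ∈ [r, 1]`, `r ≤ β(v) ≤ v` (so the equilibrium ROI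
`(v − β(v))/β(v)` is nonnegative), and `β` is strictly monotonically increasing on
`[r, 1]`. -/
theorem betaROIN_shading_and_strictMono
    (N : ℕ) (hN : 3 ≤ N) (r : ℝ) (hr0 : 0 < r) (hr1 : r ≤ 1) :
    (∀ v ∈ Set.Icc r 1,
      r ≤ betaROIN N r v ∧ betaROIN N r v ≤ v ∧
        0 ≤ (v - betaROIN N r v) / betaROIN N r v) ∧
    StrictMonoOn (betaROIN N r) (Set.Icc r 1) :=
  betaROIN_shading_and_strictMono_general N hN r hr0
end

section
/- The ROI equilibrium strategy β(v) = v/(1 − log r + log v) for N = 2 uniform bidders satisfies interim incentive compatibility in the first-price auction: for all v, w ∈ [r, 1], w·(v − β(w))/β(w) ≤ v·(v − β(v))/β(v). That is, the interim ROI utility of a bidder with value v who mimics type w (winning with probability w against a single uniform[0,1] opponent bidding according to β and paying β(w)) is maximized at w = v. -/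
open Real

lemma one_sub_log_add_log_pos {r x : ℝ} (hr : 0 < r) (hrx : r ≤ x) :
    0 < 1 - log r + log x := by
  linarith [log_le_log hr hrx]

lemma mul_sub_betaROI2_div_betaROI2 {r x : ℝ} (v : ℝ) (hx : 0 < x)
    (hD : 0 < 1 - log r + log x) :
    x * (v - betaROI2 r x) / betaROI2 r x = v * (1 - log r + log x) - x := by
  unfold betaROI2
  field_simp

lemma mul_log_sub_le_mul_log_sub_self {v w : ℝ} (hv : 0 < v) (hw : 0 < w) :
    v * log w - w ≤ v * log v - v := by
  have hlog : log (w / v) ≤ w / v - 1 := log_le_sub_one_of_pos (div_pos hw hv)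
  rw [log_div hw.ne' hv.ne'] at hlog
  have hscaled := mul_le_mul_of_nonneg_left hlog hv.le
  rw [mul_sub v (w / v) 1, mul_div_cancel₀ w hv.ne', mul_one] at hscaled
  linarith

theorem betaROI2_interim_ic_general
    (r : ℝ) (hr0 : 0 < r) :
    ∀ v ∈ Set.Icc r 1, ∀ w ∈ Set.Icc r 1,
      w * (v - betaROI2 r w) / betaROI2 r w ≤
        v * (v - betaROI2 r v) / betaROI2 r v := by
  rintro v ⟨hrv, -⟩ w ⟨hrw, -⟩
  have hv : 0 < v := hr0.trans_le hrv
  have hw : 0 < w := hr0.trans_le hrw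
  rw [mul_sub_betaROI2_div_betaROI2 v hw (one_sub_log_add_log_pos hr0 hrw),
    mul_sub_betaROI2_div_betaROI2 v hv (one_sub_log_add_log_pos hr0 hrv)]
  linarith [mul_log_sub_le_mul_log_sub_self hv hw]

/-- Interim incentive compatibility of the ROI equilibrium strategy
`β(v) = v/(1 − log r + log v)` for `N = 2` uniform bidders in the first-price auction:
for all `v, w ∈ [r, 1]`, the interim ROI utility `w·(v − β(w))/β(w)` of a bidder with
value `v` mimicking type `w` (winning with probability `w` against a single uniform
`[0,1]` opponent bidding according to `β`, and paying `β(w)`) is at most the truthful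
interim ROI utility `v·(v − β(v))/β(v)`. -/
theorem betaROI2_interim_ic
    (r : ℝ) (hr0 : 0 < r) (hr1 : r ≤ 1) :
    ∀ v ∈ Set.Icc r 1, ∀ w ∈ Set.Icc r 1,
      w * (v - betaROI2 r w) / betaROI2 r w ≤
        v * (v - betaROI2 r v) / betaROI2 r v :=
  betaROI2_interim_ic_general r hr0
end
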